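/- arXiv:2309.04444 — 2 statements merged into one kernel-verified Lean document; each statement's English description precedes it below -/
import Mathlib

section
/- Let κ ∈ (0,1), let η̄₁ ≥ 0, η̄₂ > 0, γ > 0 be real constants, let Q be a symmetric positive definite n×n real matrix, let V : ℝⁿ → ℝ, let x₀, x₀⁺, x₁ ∈ ℝⁿ, and let m be a natural number. Assume the Lyapunov descent inequality V(x₁) ≤ V(x₀) − ‖x₀‖_Q² holds, and that the suboptimality bound |V(x₀⁺) − V(x₁)| ≤ 2η̄₁γκᵐ‖x₀‖_Q + 2η̄₂γ²κ²ᵐ‖x₀‖_Q² holds. If ‖x₀‖_Q ≥ 1 and m > log(2η̄₁γ + 2η̄₂γ²)/log(1/κ), then, setting β := (2η̄₁γ + 2η̄₂γ²)κᵐ, one has β < 1 and V(x₀⁺) ≤ V(x₀) − (1 − β)‖x₀‖_Q². -/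
open Matrix

/-- Generalized stopping criterion, case `‖x₀‖_Q ≥ 1`. -/
theorem generalized_stopping_criterion_case_geq_one
    {n : ℕ} (κ η₁ η₂ γ : ℝ) (hκ0 : 0 < κ) (hκ1 : κ < 1)
    (hη₁ : 0 ≤ η₁) (hη₂ : 0 < η₂) (hγ : 0 < γ)
    (Q : Matrix (Fin n) (Fin n) ℝ) (hQ : Q.PosDef)
    (V : (Fin n → ℝ) → ℝ) (x₀ x₀p x₁ : Fin n → ℝ) (m : ℕ)
    (hdesc : V x₁ ≤ V x₀ - Real.sqrt (x₀ ⬝ᵥ Q.mulVec x₀) ^ 2)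
    (hsub : |V x₀p - V x₁| ≤
      2 * η₁ * γ * κ ^ m * Real.sqrt (x₀ ⬝ᵥ Q.mulVec x₀) +
      2 * η₂ * γ ^ 2 * κ ^ (2 * m) * Real.sqrt (x₀ ⬝ᵥ Q.mulVec x₀) ^ 2)
    (hx₀ : 1 ≤ Real.sqrt (x₀ ⬝ᵥ Q.mulVec x₀))
    (hm : (m : ℝ) > Real.log (2 * η₁ * γ + 2 * η₂ * γ ^ 2) / Real.log (1 / κ)) :
    (2 * η₁ * γ + 2 * η₂ * γ ^ 2) * κ ^ m < 1 ∧
    V x₀p ≤ V x₀ -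
      (1 - (2 * η₁ * γ + 2 * η₂ * γ ^ 2) * κ ^ m) * Real.sqrt (x₀ ⬝ᵥ Q.mulVec x₀) ^ 2 := by
  set s := Real.sqrt (x₀ ⬝ᵥ Q.mulVec x₀) with hs
  set C := 2 * η₁ * γ + 2 * η₂ * γ ^ 2 with hC
  have hCpos : 0 < C := by positivity
  have hlogκ : 0 < Real.log (1 / κ) := by
    apply Real.log_pos
    rw [lt_div_iff₀ hκ0]; linarith
  have hml : Real.log C < (m : ℝ) * Real.log (1 / κ) := by
    rw [gt_iff_lt, div_lt_iff₀ hlogκ] at hm; linarith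
  have hκm : κ ^ m < 1 / C := by
    have h1 : Real.log (κ ^ m) < Real.log (1 / C) := by
      rw [Real.log_pow, Real.log_div one_ne_zero (ne_of_gt hCpos),
        Real.log_one]
      rw [Real.log_div one_ne_zero (ne_of_gt hκ0), Real.log_one] at hml
      push_cast
      nlinarith
    have := Real.exp_lt_exp.mpr h1
    rwa [Real.exp_log (by positivity), Real.exp_log (by positivity)] at this
  have hβ : C * κ ^ m < 1 := by
    rw [lt_div_iff₀ hCpos] at hκm; linarith
  refine ⟨hβ, ?_⟩
  have habs := abs_le.mp hsub
  have hκm1 : κ ^ m ≤ 1 := pow_le_one₀ hκ0.le hκ1.le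
  have hκ2m : κ ^ (2 * m) ≤ κ ^ m := by
    rw [two_mul, pow_add]
    nlinarith [pow_pos hκ0 m]
  have hss : s ≤ s ^ 2 := by nlinarith
  have hκmpos : 0 < κ ^ m := pow_pos hκ0 m
  nlinarith [habs.2, mul_le_mul_of_nonneg_left hss (by positivity : (0:ℝ) ≤ 2 * η₁ * γ * κ ^ m),
    mul_le_mul_of_nonneg_left hκ2m (by positivity : (0:ℝ) ≤ 2 * η₂ * γ ^ 2 * s ^ 2)]
end

section
/- Let E = EuclideanSpace ℝ (Fin n), let H : E → E be a self-adjoint continuous linear map, let c ∈ E, and let 0 < μ ≤ L be real numbers such that μ‖v‖² ≤ ⟪v, H v⟫ ≤ L‖v‖² for all v ∈ E. Define J(u) := ½⟪u, H u⟫ + ⟪c, u⟫, so that ∇J(u) = H u + c. Let U ⊆ E be a nonempty closed convex set and let u⋆ ∈ U be a minimizer of J over U. Then for every u ∈ E, the projected gradient iterate u⁺ := Proj_U(u − (1/L)(H u + c)) satisfies ‖u⁺ − u⋆‖ ≤ (1 − μ/L)‖u − u⋆‖, where Proj_U denotes the metric projection onto U. -/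
/-!
At a minimizer `u⋆` of `J` over `U` the first-order condition `⟪∇J(u⋆), w - u⋆⟫ ≥ 0` says that
`u⋆` is the projection of `u⋆ - (1/L) ∇J(u⋆)` onto `U`. Projections onto a convex set are
nonexpansive, so `‖u⁺ - u⋆‖ ≤ ‖(I - H/L)(u - u⋆)‖`, and the symmetric operator `I - H/L` has
Rayleigh quotients in `[0, 1 - μ/L]`, hence norm at most `1 - μ/L`.
-/

open scoped RealInnerProductSpace

section InnerProductSpace

variable {E : Type*} [NormedAddCommGroup E] [InnerProductSpace ℝ E]

theorem ContinuousLinearMap.opNorm_le_of_abs_inner_self_le {T : E →L[ℝ] E}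
    (hT : (T : E →ₗ[ℝ] E).IsSymmetric) {κ : ℝ} (hκ : 0 ≤ κ)
    (h : ∀ x, |⟪T x, x⟫| ≤ κ * ‖x‖ ^ 2) : ‖T‖ ≤ κ := by
  rw [T.norm_eq_iSup_rayleighQuotient hT]
  refine ciSup_le fun x => ?_
  rw [rayleighQuotient, reApplyInnerSelf_apply, RCLike.re_to_real, abs_div, abs_sq]
  exact div_le_of_le_mul₀ (sq_nonneg _) hκ (h x)

theorem norm_sub_one_div_smul_le_of_inner_self_bounds {H : E →L[ℝ] E}
    (hH : (H : E →ₗ[ℝ] E).IsSymmetric) {μ L : ℝ} (hL : 0 < L) (hμL : μ ≤ L)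
    (hbound : ∀ v : E, μ * ‖v‖ ^ 2 ≤ ⟪v, H v⟫ ∧ ⟪v, H v⟫ ≤ L * ‖v‖ ^ 2) (v : E) :
    ‖v - (1 / L) • H v‖ ≤ (1 - μ / L) * ‖v‖ := by
  set B : E →L[ℝ] E := ContinuousLinearMap.id ℝ E - (1 / L) • H
  have hB : (B : E →ₗ[ℝ] E).IsSymmetric := fun x y => by
    change ⟪x - (1 / L) • H x, y⟫ = ⟪x, y - (1 / L) • H y⟫
    rw [inner_sub_left, inner_sub_right, real_inner_smul_left, real_inner_smul_right,
      hH.apply_clm]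
  have hκ : 0 ≤ 1 - μ / L := sub_nonneg.2 ((div_le_one hL).2 hμL)
  have hrayleigh : ∀ x, |⟪B x, x⟫| ≤ (1 - μ / L) * ‖x‖ ^ 2 := fun x => by
    have hquad : ⟪B x, x⟫ = ‖x‖ ^ 2 - ⟪x, H x⟫ / L := by
      have hBx : B x = x - (1 / L) • H x := rfl
      rw [hBx, inner_sub_left, real_inner_smul_left, real_inner_self_eq_norm_sq,
        real_inner_comm x]
      ring
    obtain ⟨hlow, hupp⟩ := hbound x
    rw [hquad, abs_le]
    constructor
    · have : ⟪x, H x⟫ / L ≤ ‖x‖ ^ 2 := (div_le_iff₀ hL).2 (by linarith)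
      linarith [mul_nonneg hκ (sq_nonneg ‖x‖)]
    · have : μ * ‖x‖ ^ 2 / L ≤ ⟪x, H x⟫ / L := div_le_div_of_nonneg_right hlow hL.le
      calc ‖x‖ ^ 2 - ⟪x, H x⟫ / L ≤ ‖x‖ ^ 2 - μ * ‖x‖ ^ 2 / L := by linarith
        _ = (1 - μ / L) * ‖x‖ ^ 2 := by ring
  calc ‖v - (1 / L) • H v‖ = ‖B v‖ := rfl
    _ ≤ ‖B‖ * ‖v‖ := B.le_opNorm v
    _ ≤ (1 - μ / L) * ‖v‖ := by
      gcongr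
      exact B.opNorm_le_of_abs_inner_self_le hB hκ hrayleigh

theorem hasFDerivAt_half_inner_self_add_inner {H : E →L[ℝ] E}
    (hH : (H : E →ₗ[ℝ] E).IsSymmetric) (c u : E) :
    HasFDerivAt (fun v => (1 / 2) * ⟪v, H v⟫ + ⟪c, v⟫) (innerSL ℝ (H u + c)) u := by
  have hquad : (fun v => ⟪v, H v⟫) = H.reApplyInnerSelf := funext fun v => by
    rw [H.reApplyInnerSelf_apply, RCLike.re_to_real, real_inner_comm]
  have hderiv := ((hquad ▸ hH.hasStrictFDerivAt_reApplyInnerSelf u).hasFDerivAt.const_mul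
    (1 / 2 : ℝ)).add ((innerSL ℝ c).hasFDerivAt (x := u))
  refine hderiv.congr_fderiv ?_
  ext w
  simp only [map_add, add_apply, smul_apply, innerSL_apply_apply, two_smul]
  ring

theorem IsMinOn.inner_sub_nonneg_of_hasFDerivAt {f : E → ℝ} {s : Set E} {a g : E}
    (hmin : IsMinOn f s a) (hs : Convex ℝ s) (ha : a ∈ s) (hf : HasFDerivAt f (innerSL ℝ g) a)
    {w : E} (hw : w ∈ s) : 0 ≤ ⟪g, w - a⟫ :=
  hmin.localize.hasFDerivWithinAt_nonneg hf.hasFDerivWithinAt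
    (sub_mem_posTangentConeAt_of_segment_subset (hs.segment_subset ha hw))

theorem inner_sub_nonpos_of_forall_norm_sub_le {K : Set E} (hK : Convex ℝ K) {z p : E}
    (hp : p ∈ K) (hnear : ∀ w ∈ K, ‖z - p‖ ≤ ‖z - w‖) {w : E} (hw : w ∈ K) :
    ⟪z - p, w - p⟫ ≤ 0 := by
  have : Nonempty K := ⟨⟨p, hp⟩⟩
  have hinf : ‖z - p‖ = ⨅ w : K, ‖z - w‖ :=
    le_antisymm (le_ciInf fun w => hnear w w.2)
      (ciInf_le (f := fun w : K => ‖z - w‖) ⟨0, Set.forall_mem_range.2 fun _ => norm_nonneg _⟩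
        ⟨p, hp⟩)
  exact (norm_eq_iInf_iff_real_inner_le_zero hK hp).1 hinf w hw

theorem norm_sub_le_of_inner_sub_nonpos {z z' p p' : E} (h : ⟪z - p, p' - p⟫ ≤ 0)
    (h' : ⟪z' - p', p - p'⟫ ≤ 0) : ‖p - p'‖ ≤ ‖z - z'‖ := by
  have hsq : ‖p - p'‖ ^ 2 ≤ ⟪z - z', p - p'⟫ := by
    have hsplit : ⟪z - z', p - p'⟫ = ‖p - p'‖ ^ 2 - ⟪z - p, p' - p⟫ - ⟪z' - p', p - p'⟫ := by
      rw [← real_inner_self_eq_norm_sq]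
      simp only [inner_sub_left, inner_sub_right, real_inner_comm p p']
      ring
    linarith
  have hcs := real_inner_le_norm (z - z') (p - p')
  nlinarith [norm_nonneg (p - p'), norm_nonneg (z - z')]

end InnerProductSpace

theorem pgdm_linear_convergence_general
    {n : ℕ} (H : EuclideanSpace ℝ (Fin n) →L[ℝ] EuclideanSpace ℝ (Fin n))
    (hH : IsSelfAdjoint H) (c : EuclideanSpace ℝ (Fin n)) (μ L : ℝ)
    (hμ : 0 < μ) (hμL : μ ≤ L)
    (hbound : ∀ v : EuclideanSpace ℝ (Fin n),
      μ * ‖v‖ ^ 2 ≤ ⟪v, H v⟫ ∧ ⟪v, H v⟫ ≤ L * ‖v‖ ^ 2)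
    (J : EuclideanSpace ℝ (Fin n) → ℝ)
    (hJ : ∀ u, J u = (1 / 2) * ⟪u, H u⟫ + ⟪c, u⟫)
    (U : Set (EuclideanSpace ℝ (Fin n)))
    (hUconv : Convex ℝ U)
    (ustar : EuclideanSpace ℝ (Fin n)) (hustarU : ustar ∈ U)
    (hmin : ∀ u ∈ U, J ustar ≤ J u) :
    ∀ u : EuclideanSpace ℝ (Fin n), ∀ up ∈ U,
      (∀ w ∈ U, ‖u - (1 / L) • (H u + c) - up‖ ≤ ‖u - (1 / L) • (H u + c) - w‖) →
      ‖up - ustar‖ ≤ (1 - μ / L) * ‖u - ustar‖ := by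
  intro u up hupU hnear
  have hL : 0 < L := hμ.trans_le hμL
  have hsym := hH.isSymmetric
  have hoptimal : 0 ≤ ⟪H ustar + c, up - ustar⟫ :=
    IsMinOn.inner_sub_nonneg_of_hasFDerivAt hmin hUconv hustarU
      (funext hJ ▸ hasFDerivAt_half_inner_self_add_inner hsym c ustar) hupU
  have hfixed : ⟪ustar - (1 / L) • (H ustar + c) - ustar, up - ustar⟫ ≤ 0 := by
    rw [sub_sub_cancel_left, inner_neg_left, real_inner_smul_left, neg_nonpos]
    positivity
  calc ‖up - ustar‖
      ≤ ‖u - (1 / L) • (H u + c) - (ustar - (1 / L) • (H ustar + c))‖ :=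
        norm_sub_le_of_inner_sub_nonpos
          (inner_sub_nonpos_of_forall_norm_sub_le hUconv hupU hnear hustarU) hfixed
    _ = ‖(u - ustar) - (1 / L) • H (u - ustar)‖ := by rw [map_sub]; congr 1; module
    _ ≤ (1 - μ / L) * ‖u - ustar‖ :=
        norm_sub_one_div_smul_le_of_inner_self_bounds hsym hL hμL hbound _

/-- Linear convergence rate `κ = 1 − μ/L` of the projected gradient descent
method with step size `1/L` on a `μ`-strongly convex, `L`-smooth quadratic objective.
The projected gradient iterate `u⁺ = Proj_U(u − (1/L)(Hu + c))` is characterized as the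
(unique) nearest point of `U` to `u − (1/L)(Hu + c)`. -/
theorem pgdm_linear_convergence
    {n : ℕ} (H : EuclideanSpace ℝ (Fin n) →L[ℝ] EuclideanSpace ℝ (Fin n))
    (hH : IsSelfAdjoint H) (c : EuclideanSpace ℝ (Fin n)) (μ L : ℝ)
    (hμ : 0 < μ) (hμL : μ ≤ L)
    (hbound : ∀ v : EuclideanSpace ℝ (Fin n),
      μ * ‖v‖ ^ 2 ≤ ⟪v, H v⟫ ∧ ⟪v, H v⟫ ≤ L * ‖v‖ ^ 2)
    (J : EuclideanSpace ℝ (Fin n) → ℝ)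
    (hJ : ∀ u, J u = (1 / 2) * ⟪u, H u⟫ + ⟪c, u⟫)
    (U : Set (EuclideanSpace ℝ (Fin n))) (hUne : U.Nonempty) (hUcl : IsClosed U)
    (hUconv : Convex ℝ U)
    (ustar : EuclideanSpace ℝ (Fin n)) (hustarU : ustar ∈ U)
    (hmin : ∀ u ∈ U, J ustar ≤ J u) :
    ∀ u : EuclideanSpace ℝ (Fin n), ∀ up ∈ U,
      (∀ w ∈ U, ‖u - (1 / L) • (H u + c) - up‖ ≤ ‖u - (1 / L) • (H u + c) - w‖) →
      ‖up - ustar‖ ≤ (1 - μ / L) * ‖u - ustar‖ :=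
  pgdm_linear_convergence_general H hH c μ L hμ hμL hbound J hJ U hUconv ustar hustarU hmin
end
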